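/- arXiv:2406.02186 — 2 statements merged into one kernel-verified Lean document; each statement's English description precedes it below -/
import Mathlib

section
/- Fix real parameters a₁, a₂ ∈ (0,1], b₁, b₂ ∈ (0,1), λ₁, λ₂ > 0, set u_i = b_iλ_i/a_i, assume √u₁ + √u₂ < 1, and define F : (0,∞) → ℝ by F(c) = ∏_{i=1}^{2} a_i c/(a_i c + b_i λ_i). Then F(c) < c for all c ∈ (0, c_S); F(c) > c for all c ∈ (c_S, c_L); and F(c) < c for all c ∈ (c_L, ∞). -/
open Real

/-- The product map `F(c) = ∏_{i=1,2} aᵢ c / (aᵢ c + bᵢ λᵢ)`. -/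
noncomputable def twoPairF (a₁ a₂ b₁ b₂ l₁ l₂ c : ℝ) : ℝ :=
  (a₁ * c / (a₁ * c + b₁ * l₁)) * (a₂ * c / (a₂ * c + b₂ * l₂))

/-- Discriminant `D = (1 − u₁ − u₂)² − 4 u₁ u₂` with `uᵢ = bᵢ λᵢ / aᵢ`. -/
noncomputable def twoPairD (a₁ a₂ b₁ b₂ l₁ l₂ : ℝ) : ℝ :=
  (1 - b₁ * l₁ / a₁ - b₂ * l₂ / a₂) ^ 2 - 4 * (b₁ * l₁ / a₁) * (b₂ * l₂ / a₂)

/-- Larger fixed point `c_L = ((1 − u₁ − u₂) + √D)/2`. -/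
noncomputable def twoPairCL (a₁ a₂ b₁ b₂ l₁ l₂ : ℝ) : ℝ :=
  ((1 - b₁ * l₁ / a₁ - b₂ * l₂ / a₂) + Real.sqrt (twoPairD a₁ a₂ b₁ b₂ l₁ l₂)) / 2

/-- Smaller fixed point `c_S = ((1 − u₁ − u₂) − √D)/2`. -/
noncomputable def twoPairCS (a₁ a₂ b₁ b₂ l₁ l₂ : ℝ) : ℝ :=
  ((1 - b₁ * l₁ / a₁ - b₂ * l₂ / a₂) - Real.sqrt (twoPairD a₁ a₂ b₁ b₂ l₁ l₂)) / 2

/-!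
Dividing each factor by `aᵢ` gives `F(c) = c² / ((c + u₁)(c + u₂))`, so for `c > 0` the sign of
`c − F(c)` is that of `q(c) = c² − (1 − u₁ − u₂) c + u₁ u₂ = (c − c_S)(c − c_L)`. With `sᵢ = √uᵢ`
the discriminant of `q` factors as `(1 − (s₁ + s₂)²)(1 − (s₁ − s₂)²)`, which is positive when
`s₁ + s₂ < 1`; and `c_S > 0` because `q(0) = u₁ u₂ > 0` while `1 − u₁ − u₂ > 0`.
-/

lemma mul_div_mul_add_eq {a b c : ℝ} (ha : a ≠ 0) :
    a * c / (a * c + b) = c / (c + b / a) := by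
  rw [show a * c + b = a * (c + b / a) by field_simp, mul_div_mul_left _ _ ha]

lemma discrim_pos_of_sqrt_add_sqrt_lt_one {u v : ℝ} (hu : 0 ≤ u) (hv : 0 ≤ v)
    (h : √u + √v < 1) : 0 < (1 - u - v) ^ 2 - 4 * u * v := by
  obtain ⟨s, hs, rfl⟩ : ∃ s, 0 ≤ s ∧ s ^ 2 = u := ⟨√u, sqrt_nonneg u, sq_sqrt hu⟩
  obtain ⟨t, ht, rfl⟩ : ∃ t, 0 ≤ t ∧ t ^ 2 = v := ⟨√v, sqrt_nonneg v, sq_sqrt hv⟩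
  rw [sqrt_sq hs, sqrt_sq ht] at h
  have hsum : 0 < 1 - (s + t) ^ 2 := by nlinarith
  have hdiff : 0 < 1 - (s - t) ^ 2 := by nlinarith [mul_nonneg hs ht]
  calc (0 : ℝ) < (1 - (s + t) ^ 2) * (1 - (s - t) ^ 2) := mul_pos hsum hdiff
    _ = (1 - s ^ 2 - t ^ 2) ^ 2 - 4 * s ^ 2 * t ^ 2 := by ring

lemma sqrt_discrim_lt_of_sqrt_add_sqrt_lt_one {u v : ℝ} (hu : 0 < u) (hv : 0 < v)
    (h : √u + √v < 1) : √((1 - u - v) ^ 2 - 4 * u * v) < 1 - u - v := by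
  have hS : 0 < 1 - u - v := by
    nlinarith [sq_sqrt hu.le, sq_sqrt hv.le, sqrt_pos.2 hu, sqrt_pos.2 hv]
  rw [sqrt_lt' hS]
  nlinarith [mul_pos hu hv]

lemma sq_div_mul_lt_self_iff {u v c : ℝ} (hu : 0 ≤ u) (hv : 0 ≤ v) (hc : 0 < c) :
    c ^ 2 / ((c + u) * (c + v)) < c ↔ 0 < c ^ 2 - (1 - u - v) * c + u * v := by
  rw [div_lt_iff₀ (by positivity), ← sub_pos,
    show c * ((c + u) * (c + v)) - c ^ 2 = c * (c ^ 2 - (1 - u - v) * c + u * v) by ring,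
    mul_pos_iff_of_pos_left hc]

lemma lt_sq_div_mul_iff {u v c : ℝ} (hu : 0 ≤ u) (hv : 0 ≤ v) (hc : 0 < c) :
    c < c ^ 2 / ((c + u) * (c + v)) ↔ c ^ 2 - (1 - u - v) * c + u * v < 0 := by
  rw [lt_div_iff₀ (by positivity), ← sub_neg,
    show c * ((c + u) * (c + v)) - c ^ 2 = c * (c ^ 2 - (1 - u - v) * c + u * v) by ring]
  exact ⟨fun h => neg_of_mul_neg_right h hc.le, mul_neg_of_pos_of_neg hc⟩

section TwoPair

variable {a₁ a₂ b₁ b₂ l₁ l₂ : ℝ}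

lemma twoPairF_eq (ha₁ : a₁ ≠ 0) (ha₂ : a₂ ≠ 0) (c : ℝ) :
    twoPairF a₁ a₂ b₁ b₂ l₁ l₂ c = c ^ 2 / ((c + b₁ * l₁ / a₁) * (c + b₂ * l₂ / a₂)) := by
  rw [twoPairF, mul_div_mul_add_eq ha₁, mul_div_mul_add_eq ha₂, div_mul_div_comm, sq]

lemma quadratic_eq_mul_sub_twoPairCS_mul_sub_twoPairCL (hD : 0 ≤ twoPairD a₁ a₂ b₁ b₂ l₁ l₂)
    (c : ℝ) :
    c ^ 2 - (1 - b₁ * l₁ / a₁ - b₂ * l₂ / a₂) * c + b₁ * l₁ / a₁ * (b₂ * l₂ / a₂) =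
      (c - twoPairCS a₁ a₂ b₁ b₂ l₁ l₂) * (c - twoPairCL a₁ a₂ b₁ b₂ l₁ l₂) := by
  have hsq := sq_sqrt hD
  unfold twoPairCS twoPairCL
  unfold twoPairD at hsq ⊢
  linear_combination (1 / 4 : ℝ) * hsq

lemma twoPairCS_pos (hu₁ : 0 < b₁ * l₁ / a₁) (hu₂ : 0 < b₂ * l₂ / a₂)
    (h : √(b₁ * l₁ / a₁) + √(b₂ * l₂ / a₂) < 1) : 0 < twoPairCS a₁ a₂ b₁ b₂ l₁ l₂ :=
  half_pos (sub_pos.2 (sqrt_discrim_lt_of_sqrt_add_sqrt_lt_one hu₁ hu₂ h))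

lemma twoPairCS_lt_twoPairCL (hD : 0 < twoPairD a₁ a₂ b₁ b₂ l₁ l₂) :
    twoPairCS a₁ a₂ b₁ b₂ l₁ l₂ < twoPairCL a₁ a₂ b₁ b₂ l₁ l₂ := by
  unfold twoPairCS twoPairCL
  linarith [sqrt_pos.2 hD]

end TwoPair

theorem twoPairF_sign_general (a₁ a₂ b₁ b₂ l₁ l₂ : ℝ)
    (ha₁ : 0 < a₁) (ha₂ : 0 < a₂)
    (hb₁ : 0 < b₁) (hb₂ : 0 < b₂)
    (hl₁ : 0 < l₁) (hl₂ : 0 < l₂)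
    (hcond : Real.sqrt (b₁ * l₁ / a₁) + Real.sqrt (b₂ * l₂ / a₂) < 1) :
    (∀ c ∈ Set.Ioo 0 (twoPairCS a₁ a₂ b₁ b₂ l₁ l₂),
      twoPairF a₁ a₂ b₁ b₂ l₁ l₂ c < c) ∧
    (∀ c ∈ Set.Ioo (twoPairCS a₁ a₂ b₁ b₂ l₁ l₂) (twoPairCL a₁ a₂ b₁ b₂ l₁ l₂),
      c < twoPairF a₁ a₂ b₁ b₂ l₁ l₂ c) ∧
    (∀ c ∈ Set.Ioi (twoPairCL a₁ a₂ b₁ b₂ l₁ l₂),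
      twoPairF a₁ a₂ b₁ b₂ l₁ l₂ c < c) := by
  have hu₁ : 0 < b₁ * l₁ / a₁ := by positivity
  have hu₂ : 0 < b₂ * l₂ / a₂ := by positivity
  have hD : 0 < twoPairD a₁ a₂ b₁ b₂ l₁ l₂ :=
    discrim_pos_of_sqrt_add_sqrt_lt_one hu₁.le hu₂.le hcond
  have hcS := twoPairCS_pos hu₁ hu₂ hcond
  have hcScL := twoPairCS_lt_twoPairCL hD
  have hq := quadratic_eq_mul_sub_twoPairCS_mul_sub_twoPairCL hD.le
  simp only [twoPairF_eq ha₁.ne' ha₂.ne']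
  refine ⟨fun c ⟨hc, hc_lt⟩ => ?_, fun c ⟨hc_gt, hc_lt⟩ => ?_, fun c (hc_gt : _ < c) => ?_⟩
  · rw [sq_div_mul_lt_self_iff hu₁.le hu₂.le hc, hq]
    exact mul_pos_of_neg_of_neg (by linarith) (by linarith)
  · rw [lt_sq_div_mul_iff hu₁.le hu₂.le (by linarith), hq]
    exact mul_neg_of_pos_of_neg (by linarith) (by linarith)
  · rw [sq_div_mul_lt_self_iff hu₁.le hu₂.le (by linarith), hq]
    exact mul_pos (by linarith) (by linarith)

/-- Sign of `F(c) − c` on the three intervals cut out by the two positive fixed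
points `c_S < c_L`: `F(c) < c` on `(0, c_S)`, `F(c) > c` on `(c_S, c_L)`, and
`F(c) < c` on `(c_L, ∞)`. -/
theorem twoPairF_sign (a₁ a₂ b₁ b₂ l₁ l₂ : ℝ)
    (ha₁ : 0 < a₁) (ha₁' : a₁ ≤ 1) (ha₂ : 0 < a₂) (ha₂' : a₂ ≤ 1)
    (hb₁ : 0 < b₁) (hb₁' : b₁ < 1) (hb₂ : 0 < b₂) (hb₂' : b₂ < 1)
    (hl₁ : 0 < l₁) (hl₂ : 0 < l₂)
    (hcond : Real.sqrt (b₁ * l₁ / a₁) + Real.sqrt (b₂ * l₂ / a₂) < 1) :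
    (∀ c ∈ Set.Ioo 0 (twoPairCS a₁ a₂ b₁ b₂ l₁ l₂),
      twoPairF a₁ a₂ b₁ b₂ l₁ l₂ c < c) ∧
    (∀ c ∈ Set.Ioo (twoPairCS a₁ a₂ b₁ b₂ l₁ l₂) (twoPairCL a₁ a₂ b₁ b₂ l₁ l₂),
      c < twoPairF a₁ a₂ b₁ b₂ l₁ l₂ c) ∧
    (∀ c ∈ Set.Ioi (twoPairCL a₁ a₂ b₁ b₂ l₁ l₂),
      twoPairF a₁ a₂ b₁ b₂ l₁ l₂ c < c) :=
  twoPairF_sign_general a₁ a₂ b₁ b₂ l₁ l₂ ha₁ ha₂ hb₁ hb₂ hl₁ hl₂ hcond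
end

section
/- Fix an integer K ≥ 2 and reals θ > 0, ρ > 0, and λ with 0 < λ < (θ+1)/(Kθ)·exp(−1 − θ/ρ); set a = Kθ/(θ+1) and C = exp(−θ/ρ), let p_S < p_L be the two solutions in (0, ∞) of p = C·exp(−aλ/p), and define G : (0,∞) → ℝ by G(p) = C·exp(−aλ/p). Let (p_t)_{t≥0} be the sequence defined by any p₀ ∈ (0,∞) and p_{t+1} = G(p_t). If p₀ > p_S, then p_t converges to p_L as t → ∞. If 0 < p₀ < p_S, then (p_t) is strictly decreasing and satisfies p_t < p_S for all t. -/
open Real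

/-- The symmetric fixed-point map `G(p) = exp(−θ/ρ) · exp(−(Kθ/(θ+1))·λ/p)` for
`K` symmetric transmitter–receiver pairs. -/
noncomputable def symG (K : ℕ) (θ ρ lam p : ℝ) : ℝ :=
  Real.exp (-(θ / ρ)) * Real.exp (-((K : ℝ) * θ / (θ + 1) * lam / p))

/-!
Write `G q = exp (c - b / q)` with `b = Kθ/(θ+1)·λ`, `c = -θ/ρ`. For `q > 0` we have `G q < q` iff
`φ q := log q + b / q > c`, and the fixed points are the level-`c` points of `φ`. Since `φ` decreases
on `(0, b]` and increases on `[b, ∞)`, two such points satisfy `p_S < b < p_L`, and `G q - q` is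
negative on `(0, p_S)`, positive on `(p_S, p_L)` and negative on `(p_L, ∞)`. As `G` is increasing on
`(0, ∞)`, an orbit starting above `p_S` is monotone and stays on its side of `p_L`, so it converges
to a fixed point in `(p_S, ∞)`, which can only be `p_L`; an orbit starting below `p_S` decreases.
-/

open Set Filter Topology

section LogAddDiv

variable {b : ℝ}

theorem strictAntiOn_log_add_div : StrictAntiOn (fun q => log q + b / q) (Ioc 0 b) := by
  intro x hx y hy hxy
  have hy0 : 0 < y := hx.1.trans hxy
  have hlog : log y - log x < y / x - 1 := by
    rw [← log_div hy0.ne' hx.1.ne']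
    exact log_lt_sub_one_of_pos (div_pos hy0 hx.1) ((one_lt_div hx.1).2 hxy).ne'
  have hdiv : y / x - 1 ≤ b / x - b / y := by
    rw [div_sub_div _ _ hx.1.ne' hy0.ne', div_sub_one hx.1.ne',
      div_le_div_iff₀ hx.1 (mul_pos hx.1 hy0)]
    nlinarith [mul_nonneg (mul_nonneg hx.1.le (sub_nonneg.2 hxy.le)) (sub_nonneg.2 hy.2)]
  dsimp only
  linarith

theorem strictMonoOn_log_add_div : StrictMonoOn (fun q => log q + b / q) (Ioi 0 ∩ Ici b) := by
  intro x hx y hy hxy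
  have hx0 : 0 < x := hx.1
  have hy0 : 0 < y := hx0.trans hxy
  have hlog : log x - log y < x / y - 1 := by
    rw [← log_div hx0.ne' hy0.ne']
    exact log_lt_sub_one_of_pos (div_pos hx0 hy0) ((div_lt_one hy0).2 hxy).ne
  have hdiv : b / x - b / y ≤ 1 - x / y := by
    rw [div_sub_div _ _ hx0.ne' hy0.ne', one_sub_div hy0.ne',
      div_le_div_iff₀ (mul_pos hx0 hy0) hy0]
    nlinarith [mul_nonneg (mul_nonneg hy0.le (sub_nonneg.2 hxy.le)) (sub_nonneg.2 hx.2)]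
  dsimp only
  linarith

end LogAddDiv

section ExpSubDiv

variable {b c q pS pL : ℝ}

theorem log_add_div_eq_of_exp_sub_div_eq (h : exp (c - b / q) = q) : log q + b / q = c := by
  have := congrArg log h
  rw [log_exp] at this
  linarith

theorem exp_sub_div_lt_self_iff (hq : 0 < q) : exp (c - b / q) < q ↔ c < log q + b / q := by
  rw [← lt_log_iff_exp_lt hq]
  constructor <;> intro h <;> linarith

theorem lt_exp_sub_div_self_iff (hq : 0 < q) : q < exp (c - b / q) ↔ log q + b / q < c := by
  rw [← log_lt_iff_lt_exp hq]
  constructor <;> intro h <;> linarith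

theorem mem_Ioo_of_exp_sub_div_eq (hpS : 0 < pS) (hpSL : pS < pL)
    (hS : exp (c - b / pS) = pS) (hL : exp (c - b / pL) = pL) : b ∈ Ioo pS pL := by
  have hφS := log_add_div_eq_of_exp_sub_div_eq hS
  have hφL := log_add_div_eq_of_exp_sub_div_eq hL
  constructor
  · by_contra! h
    have := strictMonoOn_log_add_div ⟨hpS, h⟩ ⟨hpS.trans hpSL, h.trans hpSL.le⟩ hpSL
    dsimp only at this
    linarith
  · by_contra! h
    have := strictAntiOn_log_add_div ⟨hpS, hpSL.le.trans h⟩ ⟨hpS.trans hpSL, h⟩ hpSL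
    dsimp only at this
    linarith

theorem exp_sub_div_lt_self_of_lt (hq : 0 < q) (hqS : q < pS) (hSb : pS ≤ b)
    (hS : exp (c - b / pS) = pS) : exp (c - b / q) < q := by
  have := strictAntiOn_log_add_div ⟨hq, hqS.le.trans hSb⟩ ⟨hq.trans hqS, hSb⟩ hqS
  dsimp only at this
  rw [exp_sub_div_lt_self_iff hq]
  linarith [log_add_div_eq_of_exp_sub_div_eq hS]

theorem lt_exp_sub_div_self_of_mem_Ioo (hpS : 0 < pS) (hq : q ∈ Ioo pS pL)
    (hS : exp (c - b / pS) = pS) (hL : exp (c - b / pL) = pL) : q < exp (c - b / q) := by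
  have hq0 : 0 < q := hpS.trans hq.1
  rw [lt_exp_sub_div_self_iff hq0]
  rcases le_total q b with hqb | hbq
  · have := strictAntiOn_log_add_div ⟨hpS, hq.1.le.trans hqb⟩ ⟨hq0, hqb⟩ hq.1
    dsimp only at this
    linarith [log_add_div_eq_of_exp_sub_div_eq hS]
  · have := strictMonoOn_log_add_div ⟨hq0, hbq⟩ ⟨hq0.trans hq.2, hbq.trans hq.2.le⟩ hq.2
    dsimp only at this
    linarith [log_add_div_eq_of_exp_sub_div_eq hL]

theorem exp_sub_div_lt_self_of_gt (hpL : 0 < pL) (hbL : b ≤ pL) (hLq : pL < q)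
    (hL : exp (c - b / pL) = pL) : exp (c - b / q) < q := by
  have hq0 : 0 < q := hpL.trans hLq
  have := strictMonoOn_log_add_div ⟨hpL, hbL⟩ ⟨hq0, hbL.trans hLq.le⟩ hLq
  dsimp only at this
  rw [exp_sub_div_lt_self_iff hq0]
  linarith [log_add_div_eq_of_exp_sub_div_eq hL]

theorem monotoneOn_exp_sub_div (hb : 0 ≤ b) : MonotoneOn (fun q => exp (c - b / q)) (Ioi 0) :=
  fun _ hx _ _ hxy => exp_le_exp.2 (sub_le_sub_left (div_le_div_of_nonneg_left hb hx hxy) c)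

theorem continuousAt_exp_sub_div (hq : q ≠ 0) : ContinuousAt (fun q => exp (c - b / q)) q := by
  fun_prop (disch := exact hq)

end ExpSubDiv

section OrbitConvergence

variable {α : Type*} [ConditionallyCompleteLinearOrder α] [TopologicalSpace α] [OrderTopology α]
  {f : α → α} {s L : α} {p : ℕ → α}

theorem tendsto_of_orbit_of_lt_map (hL : f L = L) (hmono : MonotoneOn f (Ioc s L))
    (hlt : ∀ x ∈ Ioo s L, x < f x) (hcont : ∀ x ∈ Ioc s L, ContinuousAt f x)
    (hrec : ∀ t, p (t + 1) = f (p t)) (h0 : p 0 ∈ Ioc s L) :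
    Tendsto p atTop (𝓝 L) := by
  have hle : ∀ x ∈ Ioc s L, x ≤ f x := fun x hx =>
    hx.2.lt_or_eq.elim (fun h => (hlt x ⟨hx.1, h⟩).le) fun h => by rw [h, hL]
  have hmem : ∀ t, p t ∈ Ioc s L := by
    intro t
    induction t with
    | zero => exact h0
    | succ t ih =>
      rw [hrec]
      exact ⟨ih.1.trans_le (hle _ ih), hL ▸ hmono ih ⟨ih.1.trans_le ih.2, le_rfl⟩ ih.2⟩
  have hbdd : BddAbove (range p) := ⟨L, by rintro _ ⟨t, rfl⟩; exact (hmem t).2⟩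
  have htend := tendsto_atTop_ciSup (monotone_nat_of_le_succ fun t => hrec t ▸ hle _ (hmem t)) hbdd
  set l := ⨆ t, p t
  have hl : l ∈ Ioc s L := ⟨(hmem 0).1.trans_le (le_ciSup hbdd 0), ciSup_le fun t => (hmem t).2⟩
  have hfix : f l = l := by
    refine tendsto_nhds_unique ?_ (htend.comp (tendsto_add_atTop_nat 1))
    simpa only [Function.comp_def, hrec] using (hcont l hl).tendsto.comp htend
  obtain hlL | rfl := hl.2.lt_or_eq
  · exact absurd hfix (hlt l ⟨hl.1, hlL⟩).ne'
  · exact htend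

theorem tendsto_of_orbit_of_map_lt (hL : f L = L) (hmono : MonotoneOn f (Ico L s))
    (hlt : ∀ x ∈ Ioo L s, f x < x) (hcont : ∀ x ∈ Ico L s, ContinuousAt f x)
    (hrec : ∀ t, p (t + 1) = f (p t)) (h0 : p 0 ∈ Ico L s) :
    Tendsto p atTop (𝓝 L) :=
  tendsto_of_orbit_of_lt_map (α := αᵒᵈ) (f := OrderDual.toDual ∘ f ∘ OrderDual.ofDual)
    (s := OrderDual.toDual s) (L := OrderDual.toDual L) hL
    (fun _ hx _ hy hxy => hmono ⟨hy.2, hy.1⟩ ⟨hx.2, hx.1⟩ hxy)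
    (fun x hx => hlt x ⟨hx.2, hx.1⟩) (fun x hx => hcont x ⟨hx.2, hx.1⟩) hrec ⟨h0.2, h0.1⟩

end OrbitConvergence

theorem strictAnti_of_orbit_of_map_mem_Ioo {α : Type*} [Preorder α] {a b : α} {f : α → α}
    {p : ℕ → α} (hf : ∀ x ∈ Ioo a b, f x ∈ Ioo a x) (hrec : ∀ t, p (t + 1) = f (p t))
    (h0 : p 0 ∈ Ioo a b) : StrictAnti p ∧ ∀ t, p t ∈ Ioo a b := by
  have hmem : ∀ t, p t ∈ Ioo a b := by
    intro t
    induction t with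
    | zero => exact h0
    | succ t ih =>
      rw [hrec]
      exact ⟨(hf _ ih).1, (hf _ ih).2.trans ih.2⟩
  exact ⟨strictAnti_nat_of_succ_lt fun t => hrec t ▸ (hf _ (hmem t)).2, hmem⟩

theorem sym_iteration_dichotomy_general (K : ℕ) (θ ρ lam : ℝ)
    (pS pL : ℝ) (hpS : 0 < pS) (hpSL : pS < pL)
    (hfixS : pS = symG K θ ρ lam pS) (hfixL : pL = symG K θ ρ lam pL)
    (p : ℕ → ℝ) (hp0 : 0 < p 0)
    (hrec : ∀ t, p (t + 1) = symG K θ ρ lam (p t)) :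
    (pS < p 0 → Filter.Tendsto p Filter.atTop (nhds pL)) ∧
    (p 0 < pS → StrictAnti p ∧ ∀ t, p t < pS) := by
  have hG : symG K θ ρ lam = fun q => exp (-(θ / ρ) - (K : ℝ) * θ / (θ + 1) * lam / q) := by
    funext q
    rw [symG, ← exp_add, sub_eq_add_neg]
  simp only [hG] at hfixS hfixL hrec
  have hpL : 0 < pL := hpS.trans hpSL
  obtain ⟨hSb, hbL⟩ := mem_Ioo_of_exp_sub_div_eq hpS hpSL hfixS.symm hfixL.symm
  have hmono := monotoneOn_exp_sub_div (c := -(θ / ρ)) (hpS.trans hSb).le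
  refine ⟨fun hS0 => ?_, fun h0S => ?_⟩
  · rcases le_total (p 0) pL with h0L | hL0
    · exact tendsto_of_orbit_of_lt_map hfixL.symm (hmono.mono fun x hx => hpS.trans hx.1)
        (fun x hx => lt_exp_sub_div_self_of_mem_Ioo hpS hx hfixS.symm hfixL.symm)
        (fun x hx => continuousAt_exp_sub_div (hpS.trans hx.1).ne') hrec ⟨hS0, h0L⟩
    · exact tendsto_of_orbit_of_map_lt (s := p 0 + 1) hfixL.symm
        (hmono.mono fun x hx => hpL.trans_le hx.1)
        (fun x hx => exp_sub_div_lt_self_of_gt hpL hbL.le hx.1 hfixL.symm)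
        (fun x hx => continuousAt_exp_sub_div (hpL.trans_le hx.1).ne') hrec ⟨hL0, lt_add_one _⟩
  · obtain ⟨hanti, hmem⟩ := strictAnti_of_orbit_of_map_mem_Ioo
      (fun x hx => ⟨exp_pos _, exp_sub_div_lt_self_of_lt hx.1 hx.2 hSb.le hfixS.symm⟩) hrec
      ⟨hp0, h0S⟩
    exact ⟨hanti, fun t => (hmem t).2⟩

/-- Convergence dichotomy for the symmetric iteration `p_{t+1} = G(p_t)`:
if `p₀ > p_S` the iterates converge to the larger fixed point `p_L`;
if `0 < p₀ < p_S` the iterates are strictly decreasing and stay below `p_S`. -/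
theorem sym_iteration_dichotomy (K : ℕ) (hK : 2 ≤ K) (θ ρ lam : ℝ)
    (hθ : 0 < θ) (hρ : 0 < ρ) (hlam : 0 < lam)
    (hlam' : lam < (θ + 1) / ((K : ℝ) * θ) * Real.exp (-1 - θ / ρ))
    (pS pL : ℝ) (hpS : 0 < pS) (hpSL : pS < pL)
    (hfixS : pS = symG K θ ρ lam pS) (hfixL : pL = symG K θ ρ lam pL)
    (p : ℕ → ℝ) (hp0 : 0 < p 0)
    (hrec : ∀ t, p (t + 1) = symG K θ ρ lam (p t)) :
    (pS < p 0 → Filter.Tendsto p Filter.atTop (nhds pL)) ∧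
    (p 0 < pS → StrictAnti p ∧ ∀ t, p t < pS) :=
  sym_iteration_dichotomy_general K θ ρ lam pS pL hpS hpSL hfixS hfixL p hp0 hrec
end
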